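/- Let Γ ⊆ ℤ^d be a finite-index subgroup and let f ∈ R_d be nonzero. Let V_Γ(f) = {w ∈ ℓ^∞(ℤ^d, ℝ) : w_{n+m} = w_n for all n ∈ ℤ^d and m ∈ Γ, and ∑_{k∈ℤ^d} f_k w_{n+k} = 0 for all n ∈ ℤ^d}. Then: (a) V_Γ(f) equals the real linear span of the functions n ↦ Re(ω^n) and n ↦ Im(ω^n) for ω ranging over U(f) ∩ Ω_Γ; and (b) the image of V_Γ(f) under the coordinatewise reduction map η: ℓ^∞(ℤ^d, ℝ) → 𝕋^{ℤ^d}, η(w)_n = w_n (mod 1), equals Fix°_Γ(α_f), the connected component of the identity in Fix_Γ(α_f). -/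

import Mathlib

open scoped BigOperators ENNReal

noncomputable section

/-- `R_d = ℤ[ℤ^d]`, the ring of Laurent polynomials with integer coefficients
in `d` commuting variables. -/
abbrev LP (d : ℕ) := AddMonoidAlgebra ℤ (Fin d → ℤ)

/-- Evaluation of a Laurent polynomial at a point `z ∈ ℂ^d` (with nonzero
coordinates understood): `f(z) = ∑ₙ fₙ z^n`. -/
noncomputable def lEval {d : ℕ} (f : LP d) (z : Fin d → ℂ) : ℂ :=
  Finsupp.sum f.coeff fun n c => (c : ℂ) * ∏ i, z i ^ (n i)

/-- The multiplicative `d`-torus `𝕊^d ⊆ ℂ^d`. -/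
def torus (d : ℕ) : Set (Fin d → ℂ) := {z | ∀ i, ‖z i‖ = 1}

/-- The unitary variety `U(f) = {s ∈ 𝕊^d : f(s) = 0}`. -/
def uVar {d : ℕ} (f : LP d) : Set (Fin d → ℂ) := {z ∈ torus d | lEval f z = 0}

/-- Atorality of an irreducible Laurent polynomial: there is `h ∉ (f)`
vanishing on all of `U(f)`. -/
def IsAtoralIrred {d : ℕ} (f : LP d) : Prop :=
  ∃ h : LP d, h ∉ Ideal.span ({f} : Set (LP d)) ∧ ∀ z ∈ uVar f, lEval h z = 0

/-- A general Laurent polynomial is atoral if every irreducible factor is atoral. -/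
def IsAtoral {d : ℕ} (f : LP d) : Prop :=
  ∀ g : LP d, Irreducible g → g ∣ f → IsAtoralIrred g

/-- The sup norm `‖m‖_∞` of `m ∈ ℤ^d`. -/
def normInf {d : ℕ} (m : Fin d → ℤ) : ℕ := Finset.univ.sup fun i => (m i).natAbs

/-- `⟨Γ⟩ = min {‖m‖_∞ : 0 ≠ m ∈ Γ}`. -/
noncomputable def gammaMin {d : ℕ} (Γ : AddSubgroup (Fin d → ℤ)) : ℕ :=
  sInf (normInf '' {m : Fin d → ℤ | m ∈ Γ ∧ m ≠ 0})

/-- The character power `ω^m = ω₁^{m₁} ⋯ ω_d^{m_d}`. -/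
noncomputable def cPow {d : ℕ} (ω : Fin d → ℂ) (m : Fin d → ℤ) : ℂ := ∏ i, ω i ^ (m i)

/-- `Ω_Γ = {ω ∈ 𝕊^d : ω^m = 1 for all m ∈ Γ}`, the dual group of `ℤ^d/Γ`. -/
def omegaGamma {d : ℕ} (Γ : AddSubgroup (Fin d → ℤ)) : Set (Fin d → ℂ) :=
  {ω ∈ torus d | ∀ m ∈ Γ, cPow ω m = 1}

/-- The logarithmic Mahler measure `m(f) = ∫_{[0,1]^d} log |f(e^{2πit})| dt`. -/
noncomputable def mahlerM {d : ℕ} (f : LP d) : ℝ :=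
  ∫ t in Set.univ.pi (fun _ : Fin d => Set.Icc (0:ℝ) 1),
    Real.log ‖lEval f fun i => Complex.exp (2 * Real.pi * Complex.I * (t i))‖

/-- The Riemann sum `(1/|Ω_Γ|) ∑_{ω ∈ Ω_Γ, f(ω) ≠ 0} log |f(ω)|`. -/
noncomputable def riemannSum {d : ℕ} (f : LP d) (Γ : AddSubgroup (Fin d → ℤ)) : ℝ :=
  (1 / ((omegaGamma Γ).ncard : ℝ)) *
    ∑ᶠ ω ∈ {ω ∈ omegaGamma Γ | lEval f ω ≠ 0}, Real.log ‖lEval f ω‖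

/-- The Riemann sums of `log |f|` converge to the logarithmic Mahler measure `m(f)`. -/
def riemannConv {d : ℕ} (f : LP d) : Prop :=
  ∀ ε > (0:ℝ), ∃ L > (0:ℝ), ∀ Γ : AddSubgroup (Fin d → ℤ), Γ.FiniteIndex →
    (gammaMin Γ : ℝ) > L → |riemannSum f Γ - mahlerM f| < ε

/-- The circle group `𝕋 = ℝ/ℤ`. -/
abbrev TT := AddCircle (1 : ℝ)

/-- `X_f = {x ∈ 𝕋^{ℤ^d} : ∑ₘ fₘ x_{n+m} = 0 for all n}`. -/
def Xf {d : ℕ} (f : LP d) : Set ((Fin d → ℤ) → TT) :=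
  {x | ∀ n : Fin d → ℤ, (Finsupp.sum f.coeff fun m c => c • x (n + m)) = 0}

/-- The group `Fix_Γ(α_f)` of `Γ`-periodic points of `X_f`. -/
def fixSet {d : ℕ} (f : LP d) (Γ : AddSubgroup (Fin d → ℤ)) : Set ((Fin d → ℤ) → TT) :=
  {x ∈ Xf f | ∀ n : Fin d → ℤ, ∀ m ∈ Γ, x (n + m) = x n}

/-- The group `Δ¹(X_f)` of summable homoclinic points of `α_f`. -/
def delta1 {d : ℕ} (f : LP d) : Set ((Fin d → ℤ) → TT) :=
  {x ∈ Xf f | Summable fun n => ‖x n‖}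

/-- The adjoint `f*(u) = f(u⁻¹)`. -/
def adjLP {d : ℕ} (f : LP d) : LP d :=
  AddMonoidAlgebra.ofCoeff (Finsupp.equivMapDomain (Equiv.neg (Fin d → ℤ)) f.coeff)

/-- The shift `(α_f^m x)_n = x_{m+n}`. -/
def shiftMap {d : ℕ} (m : Fin d → ℤ) (x : (Fin d → ℤ) → TT) : (Fin d → ℤ) → TT :=
  fun n => x (m + n)

/-- The ideal `n_f` of Laurent polynomials vanishing on `U(f)`. -/
def nSet {d : ℕ} (f : LP d) : Set (LP d) := {h | ∀ z ∈ uVar f, lEval h z = 0}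

/-- The ideal `m_f` of `h` such that `h/f` has an absolutely convergent Fourier
series on `𝕊^d`. -/
def mSet {d : ℕ} (f : LP d) : Set (LP d) :=
  {h | ∃ w : (Fin d → ℤ) → ℂ, Summable (fun n => ‖w n‖) ∧
    ∀ z ∈ torus d, (∑' n, w n * cPow z n) * lEval f z = lEval h z}

/-- The subgroup `H_m = {s ∈ 𝕊^d : s^m = 1}`. -/
def subH {d : ℕ} (m : Fin d → ℤ) : Set (Fin d → ℂ) := {s ∈ torus d | cPow s m = 1}

/-- `Ω`, the set of torsion points of `𝕊^d`. -/
def torsionPts (d : ℕ) : Set (Fin d → ℂ) :=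
  {ω ∈ torus d | ∀ i, ∃ k : ℕ, 0 < k ∧ ω i ^ k = 1}

/-- `V_Γ(f)`, the space of bounded (indeed `Γ`-periodic) real points annihilated
by `f(σ̃)`. -/
def VGamma {d : ℕ} (f : LP d) (Γ : AddSubgroup (Fin d → ℤ)) : Set ((Fin d → ℤ) → ℝ) :=
  {w | (∀ n : Fin d → ℤ, ∀ m ∈ Γ, w (n + m) = w n) ∧
    ∀ n : Fin d → ℤ, (Finsupp.sum f.coeff fun k c => (c : ℝ) * w (n + k)) = 0}

/-- The coordinatewise reduction `η : ℓ^∞(ℤ^d, ℝ) → 𝕋^{ℤ^d}`. -/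
noncomputable def etaMap {d : ℕ} (w : (Fin d → ℤ) → ℝ) : (Fin d → ℤ) → TT :=
  fun n => (w n : TT)

/-- `Fix_Δ(σ)`, the set of points of `𝕋^{ℤ^d}` that are `Δ`-periodic for the full shift. -/
def fixSigma {d : ℕ} (Δ : Set (Fin d → ℤ)) : Set ((Fin d → ℤ) → TT) :=
  {x | ∀ n : Fin d → ℤ, ∀ m ∈ Δ, x (n + m) = x n}

/-- The Euclidean distance on `ℂ^d ≅ ℝ^{2d}`. -/
noncomputable def euclid {d : ℕ} (x y : Fin d → ℂ) : ℝ :=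
  Real.sqrt (∑ i, ‖x i - y i‖ ^ 2)

end

/-!
A `Γ`-periodic function is a function on the finite group `ℤ^d/Γ`, hence a combination
`∑ c_ω ω^n` of characters `ω ∈ Ω_Γ`. The operator `f(σ)` multiplies `n ↦ ω^n` by `f(ω)`, so by
linear independence of characters `w ∈ V_Γ(f)` forces `c_ω = 0` unless `f(ω) = 0`; taking real
parts gives (a).

For (b), `η(V_Γ(f))` is a connected subgroup of `Fix_Γ(α_f)`. A point of `Fix_Γ(α_f)` whose
coordinates all lie within `1/(‖f‖₁ + 2)` of `0` lifts coordinatewise to a real point whose defining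
relations hold modulo `ℤ` with error less than `1`, hence exactly; so `η(V_Γ(f))` is a
neighbourhood of `0`, hence an open and closed subgroup of `Fix_Γ(α_f)`, and is its identity
component.
-/

open Filter Topology

lemma AddChar.map_sum_eq_prod {A M : Type*} [AddCommMonoid A] [CommMonoid M] (ψ : AddChar A M)
    {ι : Type*} (s : Finset ι) (a : ι → A) : ψ (∑ i ∈ s, a i) = ∏ i ∈ s, ψ (a i) :=
  map_prod ψ.toMonoidHom (fun i => Multiplicative.ofAdd (a i)) s

lemma eq_of_mk_eq_of_periodic {G β : Type*} [AddGroup G] {Γ : AddSubgroup G} {w : G → β}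
    (hw : ∀ n, ∀ m ∈ Γ, w (n + m) = w n) {a b : G} (h : (a : G ⧸ Γ) = b) : w a = w b := by
  rw [← hw a (-a + b) (QuotientAddGroup.eq.1 h), add_neg_cancel_left]

lemma exists_lift_of_periodic {G β : Type*} [AddGroup G] {Γ : AddSubgroup G} {w : G → β}
    (hw : ∀ n, ∀ m ∈ Γ, w (n + m) = w n) : ∃ W : G ⧸ Γ → β, ∀ n : G, W n = w n :=
  ⟨fun q => Quotient.liftOn' q w fun _ _ h => eq_of_mk_eq_of_periodic hw (Quotient.sound' h),
    fun _ => rfl⟩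

theorem AddSubgroup.connectedComponentIn_zero_eq {G : Type*} [TopologicalSpace G] [AddGroup G]
    [IsTopologicalAddGroup G] {H K : AddSubgroup G} (hKH : K ≤ H) (hK : IsPreconnected (K : Set G))
    (hnhds : (K : Set G) ∈ 𝓝[H] 0) : connectedComponentIn (H : Set G) 0 = K := by
  refine subset_antisymm ?_ (hK.subset_connectedComponentIn K.zero_mem hKH)
  let K' := K.addSubgroupOf H
  have hopen : IsOpen (K' : Set H) := by
    have himage : Subtype.val '' (K' : Set H) = K :=
      Set.Subset.antisymm (by rintro _ ⟨y, hy, rfl⟩; exact hy) fun x hx => ⟨⟨x, hKH hx⟩, hx, rfl⟩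
    exact K'.isOpen_of_mem_nhds (g := 0) (mem_nhds_subtype_iff_nhdsWithin.2 (himage ▸ hnhds))
  have hclopen : IsClopen (K' : Set H) := ⟨K'.isClosed_of_isOpen hopen, hopen⟩
  rw [connectedComponentIn_eq_image H.zero_mem]
  rintro _ ⟨y, hy, rfl⟩
  exact AddSubgroup.mem_addSubgroupOf.1 (hclopen.connectedComponent_subset K'.zero_mem hy)

lemma exists_coe_eq_abs_eq_norm (y : TT) : ∃ r : ℝ, (r : TT) = y ∧ |r| = ‖y‖ := by
  obtain ⟨r, rfl⟩ := QuotientAddGroup.mk_surjective y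
  refine ⟨r - round r, ?_, (UnitAddCircle.norm_eq).symm⟩
  simp

lemma eq_zero_of_coe_eq_zero_of_abs_lt_one {r : ℝ} (h : (r : TT) = 0) (hr : |r| < 1) : r = 0 := by
  obtain ⟨k, rfl⟩ := (AddCircle.coe_eq_zero_iff 1).1 h
  have : |k| < 1 := by exact_mod_cast (by simpa using hr : |(k : ℝ)| < 1)
  simp [Int.abs_lt_one_iff.1 this]

section Characters

variable {d : ℕ}

lemma ne_zero_of_mem_torus {ω : Fin d → ℂ} (hω : ω ∈ torus d) (i : Fin d) : ω i ≠ 0 :=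
  norm_ne_zero_iff.mp (by rw [hω i]; exact one_ne_zero)

lemma cPow_add {ω : Fin d → ℂ} (hω : ∀ i, ω i ≠ 0) (a b : Fin d → ℤ) :
    cPow ω (a + b) = cPow ω a * cPow ω b := by
  simp only [cPow, Pi.add_apply, zpow_add₀ (hω _), Finset.prod_mul_distrib]

lemma sum_coeff_mul_cPow_add {ω : Fin d → ℂ} (hω : ∀ i, ω i ≠ 0) (f : LP d) (n : Fin d → ℤ) :
    (Finsupp.sum f.coeff fun k c => (c : ℂ) * cPow ω (n + k)) = cPow ω n * lEval f ω := by
  simp only [lEval, Finsupp.sum, Finset.mul_sum, cPow_add hω]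
  exact Finset.sum_congr rfl fun k _ => by rw [cPow, cPow]; ring

def AddChar.toPoint (χ : AddChar (Fin d → ℤ) ℂ) : Fin d → ℂ := fun i => χ (Pi.single i 1)

lemma AddChar.cPow_toPoint (χ : AddChar (Fin d → ℤ) ℂ) (n : Fin d → ℤ) :
    cPow χ.toPoint n = χ n := by
  conv_rhs => rw [← Finset.univ_sum_single n, AddChar.map_sum_eq_prod]
  refine Finset.prod_congr rfl fun i _ => ?_
  rw [AddChar.toPoint, ← AddChar.map_zsmul_eq_zpow, ← Pi.single_smul, smul_eq_mul, mul_one]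

lemma AddChar.cPow_toPoint_compAddMonoidHom_mk' {Γ : AddSubgroup (Fin d → ℤ)}
    (ψ : AddChar ((Fin d → ℤ) ⧸ Γ) ℂ) (n : Fin d → ℤ) :
    cPow (ψ.compAddMonoidHom (QuotientAddGroup.mk' Γ)).toPoint n = ψ n :=
  AddChar.cPow_toPoint _ n

lemma AddChar.toPoint_mem_omegaGamma {Γ : AddSubgroup (Fin d → ℤ)} [Finite ((Fin d → ℤ) ⧸ Γ)]
    (ψ : AddChar ((Fin d → ℤ) ⧸ Γ) ℂ) :
    (ψ.compAddMonoidHom (QuotientAddGroup.mk' Γ)).toPoint ∈ omegaGamma Γ := by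
  refine ⟨fun i => AddChar.norm_apply ψ _, fun m hm => ?_⟩
  rw [AddChar.cPow_toPoint_compAddMonoidHom_mk', (QuotientAddGroup.eq_zero_iff m).2 hm,
    AddChar.map_zero_eq_one]

end Characters

section Span

variable {d : ℕ} {f : LP d} {Γ : AddSubgroup (Fin d → ℤ)}

def reImChars (f : LP d) (Γ : AddSubgroup (Fin d → ℤ)) : Set ((Fin d → ℤ) → ℝ) :=
  ⋃ ω ∈ uVar f ∩ omegaGamma Γ, {(fun n => (cPow ω n).re), (fun n => (cPow ω n).im)}

def VGammaSubmodule (f : LP d) (Γ : AddSubgroup (Fin d → ℤ)) :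
    Submodule ℝ ((Fin d → ℤ) → ℝ) where
  carrier := VGamma f Γ
  add_mem' {a b} ha hb := ⟨fun n m hm => by simp [ha.1 n m hm, hb.1 n m hm], fun n => by
    have ha' := ha.2 n
    have hb' := hb.2 n
    simp only [Finsupp.sum] at ha' hb' ⊢
    simp only [Pi.add_apply, mul_add, Finset.sum_add_distrib, ha', hb', add_zero]⟩
  zero_mem' := ⟨fun _ _ _ => rfl, fun n => by simp [Finsupp.sum]⟩
  smul_mem' r a ha := ⟨fun n m hm => by simp [ha.1 n m hm], fun n => by
    have ha' := ha.2 n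
    simp only [Finsupp.sum] at ha' ⊢
    simp only [Pi.smul_apply, smul_eq_mul, mul_left_comm _ r, ← Finset.mul_sum, ha', mul_zero]⟩

@[simp]
lemma mem_VGammaSubmodule {w : (Fin d → ℤ) → ℝ} : w ∈ VGammaSubmodule f Γ ↔ w ∈ VGamma f Γ :=
  Iff.rfl

lemma re_mul_cPow_mem_VGamma {ω : Fin d → ℂ} (hω : ω ∈ uVar f ∩ omegaGamma Γ) (c : ℂ) :
    (fun n => (c * cPow ω n).re) ∈ VGamma f Γ := by
  have hne := ne_zero_of_mem_torus hω.2.1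
  refine ⟨fun n m hm => by simp only [cPow_add hne, hω.2.2 m hm, mul_one], fun n => ?_⟩
  have h := congrArg Complex.re (congrArg (c * ·) (sum_coeff_mul_cPow_add hne f n))
  simp only [hω.1.2, mul_zero, Complex.zero_re, Finsupp.sum, Finset.mul_sum] at h
  rw [Finsupp.sum, ← h, Complex.re_sum]
  refine Finset.sum_congr rfl fun k _ => ?_
  rw [mul_left_comm, ← Complex.ofReal_intCast, Complex.re_ofReal_mul]

lemma re_mul_cPow_mem_span {ω : Fin d → ℂ} (hω : ω ∈ uVar f ∩ omegaGamma Γ) (c : ℂ) :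
    (fun n => (c * cPow ω n).re) ∈ Submodule.span ℝ (reImChars f Γ) := by
  have hre : (fun n => (cPow ω n).re) ∈ reImChars f Γ := Set.mem_biUnion hω (by simp)
  have him : (fun n => (cPow ω n).im) ∈ reImChars f Γ := Set.mem_biUnion hω (by simp)
  have h : (fun n => (c * cPow ω n).re) =
      c.re • (fun n => (cPow ω n).re) - c.im • (fun n => (cPow ω n).im) := by
    ext n; simp [Complex.mul_re]
  rw [h]
  exact sub_mem (Submodule.smul_mem _ _ (Submodule.subset_span hre))
    (Submodule.smul_mem _ _ (Submodule.subset_span him))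

lemma span_reImChars_le : Submodule.span ℝ (reImChars f Γ) ≤ VGammaSubmodule f Γ := by
  refine Submodule.span_le.2 (Set.iUnion₂_subset fun ω hω => ?_)
  rintro _ (rfl | rfl)
  · simpa using re_mul_cPow_mem_VGamma hω 1
  · simpa using re_mul_cPow_mem_VGamma hω (-Complex.I)

lemma exists_sum_addChar_of_periodic [Finite ((Fin d → ℤ) ⧸ Γ)] {w : (Fin d → ℤ) → ℝ}
    (hw : ∀ n, ∀ m ∈ Γ, w (n + m) = w n) :
    ∃ c : AddChar ((Fin d → ℤ) ⧸ Γ) ℂ → ℂ, ∀ n, (w n : ℂ) = ∑ ψ, c ψ * ψ n := by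
  obtain ⟨W, hW⟩ := exists_lift_of_periodic hw
  refine ⟨(AddChar.complexBasis _).repr fun q => (W q : ℂ), fun n => ?_⟩
  have h := congrFun ((AddChar.complexBasis _).sum_repr fun q => (W q : ℂ)) n
  simpa only [AddChar.coe_complexBasis, Finset.sum_apply, Pi.smul_apply, smul_eq_mul, hW,
    eq_comm] using h

lemma coeff_mul_lEval_toPoint_eq_zero [Finite ((Fin d → ℤ) ⧸ Γ)] {w : (Fin d → ℤ) → ℝ}
    (hw : ∀ n, (Finsupp.sum f.coeff fun k c => (c : ℝ) * w (n + k)) = 0)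
    {c : AddChar ((Fin d → ℤ) ⧸ Γ) ℂ → ℂ} (hc : ∀ n, (w n : ℂ) = ∑ ψ, c ψ * ψ n)
    (ψ : AddChar ((Fin d → ℤ) ⧸ Γ) ℂ) :
    c ψ * lEval f (ψ.compAddMonoidHom (QuotientAddGroup.mk' Γ)).toPoint = 0 := by
  refine Fintype.linearIndependent_iff.1 (AddChar.complexBasis _).linearIndependent
    (fun ψ => c ψ * lEval f (ψ.compAddMonoidHom (QuotientAddGroup.mk' Γ)).toPoint)
    (funext fun q => ?_) ψ
  induction q using QuotientAddGroup.induction_on with | H n => ?_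
  have hn := congrArg ((↑) : ℝ → ℂ) (hw n)
  simp only [Finsupp.sum, Complex.ofReal_sum, Complex.ofReal_mul, Complex.ofReal_intCast, hc,
    Finset.mul_sum, Complex.ofReal_zero] at hn
  rw [Finset.sum_comm] at hn
  simp only [Finset.sum_apply, Pi.smul_apply, smul_eq_mul, AddChar.coe_complexBasis,
    Pi.zero_apply, ← hn]
  refine Finset.sum_congr rfl fun ψ _ => ?_
  have hne := ne_zero_of_mem_torus (AddChar.toPoint_mem_omegaGamma ψ).1
  rw [mul_assoc, mul_comm (lEval f _), ← AddChar.cPow_toPoint_compAddMonoidHom_mk',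
    ← sum_coeff_mul_cPow_add hne, Finsupp.sum, Finset.mul_sum]
  refine Finset.sum_congr rfl fun k _ => ?_
  rw [AddChar.cPow_toPoint_compAddMonoidHom_mk']
  ring

theorem VGamma_subset_span (hΓ : Γ.FiniteIndex) :
    VGamma f Γ ⊆ Submodule.span ℝ (reImChars f Γ) := by
  rintro w ⟨hper, hw⟩
  have : Finite ((Fin d → ℤ) ⧸ Γ) := Γ.finite_quotient_of_finiteIndex
  obtain ⟨c, hc⟩ := exists_sum_addChar_of_periodic hper
  let ω (ψ : AddChar ((Fin d → ℤ) ⧸ Γ) ℂ) := (ψ.compAddMonoidHom (QuotientAddGroup.mk' Γ)).toPoint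
  have hw_eq : w = ∑ ψ ∈ Finset.univ.filter fun ψ => lEval f (ω ψ) = 0,
      fun n => (c ψ * cPow (ω ψ) n).re := by
    ext n
    simp only [Finset.sum_apply, ω, AddChar.cPow_toPoint_compAddMonoidHom_mk']
    rw [← Complex.re_sum, Finset.sum_filter_of_ne, ← hc, Complex.ofReal_re]
    intro ψ _ hψ
    by_contra h
    exact hψ (by rw [(mul_eq_zero.1 (coeff_mul_lEval_toPoint_eq_zero hw hc ψ)).resolve_right h,
      zero_mul])
  rw [hw_eq]
  refine Submodule.sum_mem _ fun ψ hψ => re_mul_cPow_mem_span ?_ _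
  exact ⟨⟨(AddChar.toPoint_mem_omegaGamma ψ).1, (Finset.mem_filter.1 hψ).2⟩,
    AddChar.toPoint_mem_omegaGamma ψ⟩

end Span

section Reduction

variable {d : ℕ} {f : LP d} {Γ : AddSubgroup (Fin d → ℤ)}

def fixSubgroup (f : LP d) (Γ : AddSubgroup (Fin d → ℤ)) : AddSubgroup ((Fin d → ℤ) → TT) where
  carrier := fixSet f Γ
  add_mem' {x y} hx hy := ⟨fun n => by
    have hx' := hx.1 n
    have hy' := hy.1 n
    simp only [Finsupp.sum] at hx' hy' ⊢
    simp only [Pi.add_apply, smul_add, Finset.sum_add_distrib, hx', hy', add_zero],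
    fun n m hm => by simp [hx.2 n m hm, hy.2 n m hm]⟩
  zero_mem' := ⟨fun n => by simp [Finsupp.sum], fun _ _ _ => rfl⟩
  neg_mem' {x} hx := ⟨fun n => by
    have hx' := hx.1 n
    simp only [Finsupp.sum] at hx' ⊢
    simp only [Pi.neg_apply, smul_neg, Finset.sum_neg_distrib, hx', neg_zero],
    fun n m hm => by simp [hx.2 n m hm]⟩

def etaHom (d : ℕ) : ((Fin d → ℤ) → ℝ) →+ ((Fin d → ℤ) → TT) :=
  (QuotientAddGroup.mk' _).compLeft _

def etaImage (f : LP d) (Γ : AddSubgroup (Fin d → ℤ)) : AddSubgroup ((Fin d → ℤ) → TT) :=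
  (VGammaSubmodule f Γ).toAddSubgroup.map (etaHom d)

lemma continuous_etaMap : Continuous (etaMap : ((Fin d → ℤ) → ℝ) → (Fin d → ℤ) → TT) :=
  continuous_pi fun n => continuous_quotient_mk'.comp (continuous_apply n)

lemma isPreconnected_etaImage : IsPreconnected (etaMap '' VGamma f Γ) :=
  (VGammaSubmodule f Γ).convex.isPreconnected.image _ continuous_etaMap.continuousOn

lemma coe_sum_coeff_mul (f : LP d) (w : (Fin d → ℤ) → ℝ) (n : Fin d → ℤ) :
    ((Finsupp.sum f.coeff fun k c => (c : ℝ) * w (n + k) : ℝ) : TT) =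
      Finsupp.sum f.coeff fun k c => c • etaMap w (n + k) := by
  simp only [Finsupp.sum, etaMap, ← zsmul_eq_mul]
  exact map_sum (QuotientAddGroup.mk' (AddSubgroup.zmultiples (1 : ℝ))) _ _

lemma etaImage_le_fixSubgroup : etaImage f Γ ≤ fixSubgroup f Γ := by
  rintro _ ⟨w, hw, rfl⟩
  exact ⟨fun n => (coe_sum_coeff_mul f w n).symm.trans (by rw [hw.2 n]; rfl),
    fun n m hm => congrArg ((↑) : ℝ → TT) (hw.1 n m hm)⟩

lemma exists_pos_forall_norm_lt_mem_etaImage :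
    ∃ ε > 0, ∀ x ∈ fixSet f Γ, (∀ n, ‖x n‖ < ε) → x ∈ etaMap '' VGamma f Γ := by
  set C := ∑ k ∈ f.coeff.support, |(f.coeff k : ℝ)|
  have hC : 0 ≤ C := Finset.sum_nonneg fun _ _ => abs_nonneg _
  refine ⟨1 / (C + 2), by positivity, fun x hx hsmall => ?_⟩
  choose r hr hr_abs using fun n => exists_coe_eq_abs_eq_norm (x n)
  have hr_lt (n) : |r n| < 1 / (C + 2) := hr_abs n ▸ hsmall n
  have hηr : etaMap r = x := funext hr
  refine ⟨r, ⟨fun n m hm => ?_, fun n => ?_⟩, hηr⟩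
  · refine sub_eq_zero.1 (eq_zero_of_coe_eq_zero_of_abs_lt_one ?_ ?_)
    · rw [AddCircle.coe_sub, hr, hr, hx.2 n m hm, sub_self]
    · calc |r (n + m) - r n| ≤ |r (n + m)| + |r n| := abs_sub _ _
        _ < 1 / (C + 2) + 1 / (C + 2) := add_lt_add (hr_lt _) (hr_lt _)
        _ ≤ 1 := by rw [← add_div, div_le_one (by positivity)]; linarith
  · refine eq_zero_of_coe_eq_zero_of_abs_lt_one ((coe_sum_coeff_mul f r n).trans (hηr ▸ hx.1 n)) ?_
    calc |Finsupp.sum f.coeff fun k c => (c : ℝ) * r (n + k)|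
        ≤ ∑ k ∈ f.coeff.support, |(f.coeff k : ℝ)| * (1 / (C + 2)) := by
          refine (Finset.abs_sum_le_sum_abs _ _).trans (Finset.sum_le_sum fun k _ => ?_)
          rw [abs_mul]
          exact mul_le_mul_of_nonneg_left (hr_lt _).le (abs_nonneg _)
      _ = C / (C + 2) := by rw [← Finset.sum_mul, mul_one_div]
      _ < 1 := by rw [div_lt_one (by positivity)]; linarith

lemma etaImage_mem_nhdsWithin (hΓ : Γ.FiniteIndex) :
    etaMap '' VGamma f Γ ∈ 𝓝[fixSet f Γ] 0 := by
  have : Finite ((Fin d → ℤ) ⧸ Γ) := Γ.finite_quotient_of_finiteIndex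
  obtain ⟨ε, hε, hsmall⟩ := exists_pos_forall_norm_lt_mem_etaImage (f := f) (Γ := Γ)
  have hnear : ∀ᶠ x in 𝓝 (0 : (Fin d → ℤ) → TT), ∀ q : (Fin d → ℤ) ⧸ Γ, ‖x q.out‖ < ε :=
    eventually_all.2 fun q => (continuous_apply q.out).norm.tendsto' 0 0 (by simp)
      |>.eventually (gt_mem_nhds hε)
  rw [mem_nhdsWithin_iff_eventually]
  filter_upwards [hnear] with x hx hfix
  refine hsmall x hfix fun n => ?_
  rw [eq_of_mk_eq_of_periodic hfix.2 (QuotientAddGroup.out_eq' (n : (Fin d → ℤ) ⧸ Γ)).symm]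
  exact hx n

end Reduction

theorem VGamma_span_and_eta_image_general {d : ℕ} (f : LP d)
    (Γ : AddSubgroup (Fin d → ℤ)) (hΓ : Γ.FiniteIndex) :
    VGamma f Γ = ↑(Submodule.span ℝ
        (⋃ ω ∈ uVar f ∩ omegaGamma Γ,
          {(fun n => (cPow ω n).re), (fun n => (cPow ω n).im)} :
            Set ((Fin d → ℤ) → ℝ))) ∧
    etaMap '' VGamma f Γ = connectedComponentIn (fixSet f Γ) 0 :=
  ⟨subset_antisymm (VGamma_subset_span hΓ) span_reImChars_le,
    (AddSubgroup.connectedComponentIn_zero_eq etaImage_le_fixSubgroup isPreconnected_etaImage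
      (etaImage_mem_nhdsWithin hΓ)).symm⟩

/-- `V_Γ(f)` is the real span of the real and imaginary parts of the
characters coming from `U(f) ∩ Ω_Γ`, and `η(V_Γ(f)) = Fix°_Γ(α_f)`. -/
theorem VGamma_span_and_eta_image {d : ℕ} (f : LP d) (hf : f ≠ 0)
    (Γ : AddSubgroup (Fin d → ℤ)) (hΓ : Γ.FiniteIndex) :
    VGamma f Γ = ↑(Submodule.span ℝ
        (⋃ ω ∈ uVar f ∩ omegaGamma Γ,
          {(fun n => (cPow ω n).re), (fun n => (cPow ω n).im)} :
            Set ((Fin d → ℤ) → ℝ))) ∧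
    etaMap '' VGamma f Γ = connectedComponentIn (fixSet f Γ) 0 :=
  VGamma_span_and_eta_image_general f Γ hΓ
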